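/- Let n ≥ 1 and let A be an MR-subalgebra of 𝓛ₙ with tp(A) = ⟨t₁, …, tₙ⟩ and r = Σᵢ i·tᵢ. Then the freezing subgroup Fr(A) = {φ ∈ Aut(𝓛ₙ) : φ(x) = x for every x ∈ A} has cardinality 2^{n−r} · (n−r)! · ∏_{i=1}^{n} (i!)^{tᵢ}. -/

import Mathlib

@[ext] structure Cube (n : ℕ) where
  pos : Finset (Fin n)
  neg : Finset (Fin n)
  disj : Disjoint pos neg

namespace Cube
variable {n : ℕ}

instance : PartialOrder (Cube n) where
  le x y := y.pos ⊆ x.pos ∧ y.neg ⊆ x.neg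
  le_refl x := ⟨subset_rfl, subset_rfl⟩
  le_trans x y z h₁ h₂ := ⟨h₂.1.trans h₁.1, h₂.2.trans h₁.2⟩
  le_antisymm x y h₁ h₂ :=
    Cube.ext (subset_antisymm h₂.1 h₁.1) (subset_antisymm h₂.2 h₁.2)

instance : OrderTop (Cube n) where
  top := ⟨∅, ∅, by simp⟩
  le_top x := ⟨Finset.empty_subset _, Finset.empty_subset _⟩

instance : SemilatticeSup (Cube n) where
  sup x y := ⟨x.pos ∩ y.pos, x.neg ∩ y.neg,
    x.disj.mono Finset.inter_subset_left Finset.inter_subset_left⟩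
  le_sup_left x y := ⟨Finset.inter_subset_left, Finset.inter_subset_left⟩
  le_sup_right x y := ⟨Finset.inter_subset_right, Finset.inter_subset_right⟩
  sup_le x y z hx hy := ⟨Finset.subset_inter hx.1 hy.1, Finset.subset_inter hx.2 hy.2⟩

/-- The reflection `Δ(x, y)` of `y` through the centre of `x`. -/
def delta (x y : Cube n) : Cube n :=
  ⟨x.pos ∪ (y.neg \ x.neg), x.neg ∪ (y.pos \ x.pos), by
    simp only [Finset.disjoint_union_left, Finset.disjoint_union_right]
    refine ⟨⟨x.disj, Finset.sdiff_disjoint⟩, Finset.disjoint_sdiff, ?_⟩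
    exact y.disj.symm.mono Finset.sdiff_subset Finset.sdiff_subset⟩

lemma delta_le (x y : Cube n) : delta x y ≤ x :=
  ⟨Finset.subset_union_left, Finset.subset_union_left⟩

/-- The co-rank of a face of the `n`-cube. -/
def corank (x : Cube n) : ℕ := (x.pos ∪ x.neg).card

/-- The set of coatoms of `𝓛ₙ` lying above `a`. -/
def coatomsAbove (a : Cube n) : Set (Cube n) := {c | corank c = 1 ∧ a ≤ c}

/-- `A` is an MR-subalgebra of `𝓛ₙ`. -/
def IsMRSub (A : Set (Cube n)) : Prop :=
  ⊤ ∈ A ∧ (∀ x ∈ A, ∀ y ∈ A, x ⊔ y ∈ A) ∧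
    (∀ x ∈ A, ∀ y ∈ A, y ≤ x → delta x y ∈ A) ∧
    (∀ x ∈ A, ∀ y ∈ A, ∃ m ∈ A, IsGLB {x, delta (x ⊔ y) y} m)

/-- The coatoms of a subalgebra `A`: maximal elements of `A \ {⊤}`. -/
def coAt (A : Set (Cube n)) : Set (Cube n) :=
  {a | a ∈ A ∧ a ≠ ⊤ ∧ ∀ b ∈ A, b ≠ ⊤ → a ≤ b → b = a}

/-- The coatoms `a` of `A` with `|𝒞ₐ| = i`. -/
def typeSet (A : Set (Cube n)) (i : ℕ) : Set (Cube n) :=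
  {a | a ∈ coAt A ∧ (coatomsAbove a).ncard = i}

/-- An order automorphism of `𝓛ₙ` is a cubic automorphism when it preserves `Δ`. -/
def IsAut (φ : Cube n ≃o Cube n) : Prop :=
  ∀ x y : Cube n, y ≤ x → φ (delta x y) = delta (φ x) (φ y)

/-- The set of automorphisms of `𝓛ₙ`. -/
def AutSet (n : ℕ) : Set (Cube n ≃o Cube n) := {φ | IsAut φ}

/-- An automorphism of the subposet `A` preserving `Δ`. -/
def IsSubAut {A : Set (Cube n)} (ψ : A ≃o A) : Prop :=
  ∀ (x y : A), (y : Cube n) ≤ (x : Cube n) → ∀ h : delta ↑x ↑y ∈ A,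
    (ψ ⟨delta ↑x ↑y, h⟩ : Cube n) = delta ↑(ψ x) ↑(ψ y)

end Cube

/-!
Every automorphism of `𝓛ₙ` permutes the facets and commutes with the antipodal map
`Δ(𝟙, ·)`, so it is a signed permutation of the coordinates. Each `x` of an MR-subalgebra `A`
is the meet of the coatoms of `A` above it (peel off one coatom `a` at a time, passing to
`x ⊔ Δ(𝟙, Δ(a, x))`), so a signed permutation freezes `A` iff it fixes every coatom of `A`.

Two coatoms of `A` containing the same signed coordinate have a join `≠ 𝟙` in `A`, hence
coincide. So the coatoms come in antipodal pairs `{a, Δ(𝟙, a)}` with disjoint supports covering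
`r` coordinates, and fixing them all means permuting each support inside itself (the signs are
then forced) and the remaining `n - r` coordinates arbitrarily, with arbitrary signs.
-/

open Finset in
@[to_additive]
lemma Finset.prod_comp_eq_pow_of_card_fiber {ι κ M : Type*} [CommMonoid M] [DecidableEq κ]
    {s : Finset ι} {g : ι → κ} {k : ℕ} (hk : ∀ b ∈ s.image g, #{a ∈ s | g a = b} = k)
    (f : κ → M) : ∏ a ∈ s, f (g a) = (∏ b ∈ s.image g, f b) ^ k := by
  rw [prod_comp, ← prod_pow]
  exact prod_congr rfl fun b hb => by rw [hk b hb]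

section SignedStabilizer

open Finset Equiv
open scoped Nat

variable {α β : Type*}

def unorderedPair (x : Bool → β) : Sym2 β := s(x true, x false)

lemma unorderedPair_eq_iff {x y : Bool → β} :
    unorderedPair y = unorderedPair x ↔ ∃ c, ∀ b, y b = x (b ^^ c) := by
  refine ⟨fun h => ?_, fun ⟨c, h⟩ => ?_⟩
  · rcases Sym2.eq_iff.1 h with ⟨h₁, h₂⟩ | ⟨h₁, h₂⟩
    · exact ⟨false, fun b => by cases b <;> simpa⟩
    · exact ⟨true, fun b => by cases b <;> simpa⟩
  · cases c <;> simp [unorderedPair, h, Sym2.eq_swap]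

lemma eq_of_forall_eq_apply_xor {x y : Bool → β} (hx : x true ≠ x false) {c c' : Bool}
    (h : ∀ b, y b = x (b ^^ c)) (h' : ∀ b, y b = x (b ^^ c')) : c = c' := by
  have := (h true).symm.trans (h' true)
  cases c <;> cases c' <;> simp_all [eq_comm]

/-- Signed permutations preserving a labelling `L` of the signed coordinates `(e, b)`, on which
`(σ, ε)` acts by `(e, b) ↦ (σ e, b ^^ ε e)`. -/
def signedStabilizer (L : α → Bool → β) : Set (Perm α × (α → Bool)) :=
  {p | ∀ e b, L (p.1 e) b = L e (b ^^ p.2 e)}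

/-- A signed permutation preserving `L` is a permutation preserving the unordered labels,
together with signs which are free exactly on the coordinates with `L e true = L e false`. -/
noncomputable def signedStabilizerEquiv [DecidableEq β] (L : α → Bool → β) :
    signedStabilizer L ≃
      {σ : Perm α // (unorderedPair ∘ L) ∘ σ = unorderedPair ∘ L} ×
        ({e // L e true = L e false} → Bool) where
  toFun p := (⟨p.1.1, funext fun e => unorderedPair_eq_iff.2 ⟨_, p.2 e⟩⟩, fun e => p.1.2 e)
  invFun q := ⟨(q.1.1, fun e => if h : L e true = L e false then q.2 ⟨e, h⟩ else
      (unorderedPair_eq_iff.1 (congrFun q.1.2 e)).choose), fun e b => by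
    by_cases h : L e true = L e false
    · obtain ⟨c, hc⟩ := unorderedPair_eq_iff.1 (congrFun q.1.2 e)
      have hconst b : L e b = L e true := by cases b <;> simp [h]
      simp only [hc, hconst]
    · simpa [h] using (unorderedPair_eq_iff.1 (congrFun q.1.2 e)).choose_spec b⟩
  left_inv p := Subtype.ext <| Prod.ext rfl <| funext fun e => by
    by_cases h : L e true = L e false
    · simp [h]
    · simp only [h, dite_false]
      generalize_proofs hc
      exact eq_of_forall_eq_apply_xor h hc.choose_spec (p.2 e)
  right_inv q := Prod.ext rfl <| funext fun e => by simp [e.2]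

theorem ncard_signedStabilizer [Fintype α] [DecidableEq α] [DecidableEq β]
    (L : α → Bool → β) :
    (signedStabilizer L).ncard =
      (∏ s ∈ univ.image (unorderedPair ∘ L), (#{e | unorderedPair (L e) = s})!) *
        2 ^ #{e | L e true = L e false} := by
  rw [← Nat.card_coe_set_eq, Nat.card_congr (signedStabilizerEquiv L), Nat.card_prod,
    Nat.card_eq_fintype_card, DomMulAct.stabilizer_card', Nat.card_fun]
  simp [Fintype.card_subtype]

end SignedStabilizer

namespace Cube

variable {n : ℕ}

open Finset

instance : Finite (Cube n) :=
  Finite.of_injective (fun x : Cube n => (x.pos, x.neg))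
    fun _ _ h => Cube.ext (congrArg Prod.fst h) (congrArg Prod.snd h)

def side (x : Cube n) : Bool → Finset (Fin n)
  | true => x.pos
  | false => x.neg

@[simp] lemma side_true (x : Cube n) : x.side true = x.pos := rfl
@[simp] lemma side_false (x : Cube n) : x.side false = x.neg := rfl

lemma disjoint_side_not (x : Cube n) : ∀ b, Disjoint (x.side b) (x.side !b)
  | true => x.disj
  | false => x.disj.symm

lemma ext_side {x y : Cube n} (h : ∀ b, x.side b = y.side b) : x = y :=
  Cube.ext (h true) (h false)

lemma le_iff_side {x y : Cube n} : x ≤ y ↔ ∀ b, y.side b ⊆ x.side b :=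
  ⟨fun h b => b.casesOn h.2 h.1, fun h => ⟨h true, h false⟩⟩

@[simp] lemma side_top (b : Bool) : (⊤ : Cube n).side b = ∅ := by cases b <;> rfl

lemma eq_top_iff_side {x : Cube n} : x = ⊤ ↔ ∀ b, x.side b = ∅ :=
  ⟨fun h b => h ▸ side_top b, fun h => ext_side fun b => (h b).trans (side_top b).symm⟩

lemma ne_top_of_mem_side {x : Cube n} {e : Fin n} {b : Bool} (he : e ∈ x.side b) : x ≠ ⊤ := by
  rintro rfl
  simp at he

@[simp] lemma side_sup (x y : Cube n) (b : Bool) : (x ⊔ y).side b = x.side b ∩ y.side b := by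
  cases b <;> rfl

@[simp] lemma side_delta (x y : Cube n) (b : Bool) :
    (delta x y).side b = x.side b ∪ (y.side (!b) \ x.side (!b)) := by
  cases b <;> rfl

def anti (x : Cube n) : Cube n := ⟨x.neg, x.pos, x.disj.symm⟩

@[simp] lemma side_anti (x : Cube n) (b : Bool) : (anti x).side b = x.side !b := by
  cases b <;> rfl

@[simp] lemma anti_anti (x : Cube n) : anti (anti x) = x := rfl

lemma delta_top (x : Cube n) : delta ⊤ x = anti x :=
  ext_side fun b => by simp

lemma anti_eq_top_iff {x : Cube n} : anti x = ⊤ ↔ x = ⊤ := by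
  simp only [eq_top_iff_side, side_anti]
  exact ⟨fun h b => by simpa using h !b, fun h b => h !b⟩

lemma anti_ne_self {x : Cube n} (hx : x ≠ ⊤) : anti x ≠ x := by
  intro h
  refine hx (eq_top_iff_side.2 fun b => ?_)
  have := x.disjoint_side_not b
  rwa [← side_anti, h, disjoint_self] at this

def support (x : Cube n) : Finset (Fin n) := x.pos ∪ x.neg

lemma mem_support {x : Cube n} {e : Fin n} : e ∈ x.support ↔ ∃ b, e ∈ x.side b := by
  simp [support, Bool.exists_bool, or_comm]

lemma card_support (x : Cube n) : #x.support = #x.pos + #x.neg :=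
  card_union_of_disjoint x.disj

lemma support_nonempty {x : Cube n} (hx : x ≠ ⊤) : x.support.Nonempty := by
  rw [nonempty_iff_ne_empty, Ne, support, union_eq_empty]
  exact fun h => hx (Cube.ext h.1 h.2)

def facet (e : Fin n) (b : Bool) : Cube n :=
  ⟨if b then {e} else ∅, if b then ∅ else {e}, by cases b <;> simp⟩

@[simp] lemma mem_side_facet {e f : Fin n} {b c : Bool} :
    f ∈ (facet e b).side c ↔ f = e ∧ c = b := by
  cases b <;> cases c <;> simp [facet, side]

lemma facet_injective {e f : Fin n} {b c : Bool} (h : facet e b = facet f c) : e = f ∧ b = c := by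
  have he : e ∈ (facet f c).side b := h ▸ mem_side_facet.2 ⟨rfl, rfl⟩
  simpa [eq_comm] using he

@[simp] lemma anti_facet (e : Fin n) (b : Bool) : anti (facet e b) = facet e !b :=
  ext_side fun c => by ext f; simp [Bool.not_eq_eq_eq_not]

lemma le_facet {x : Cube n} {e : Fin n} {b : Bool} : x ≤ facet e b ↔ e ∈ x.side b := by
  simp only [le_iff_side, subset_iff, mem_side_facet]
  exact ⟨fun h => h b ⟨rfl, rfl⟩, by rintro h c f ⟨rfl, rfl⟩; exact h⟩

lemma facet_ne_top (e : Fin n) (b : Bool) : facet e b ≠ ⊤ :=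
  ne_top_of_mem_side (mem_side_facet.2 ⟨rfl, rfl⟩)

lemma isCoatom_facet (e : Fin n) (b : Bool) : IsCoatom (facet e b) := by
  refine ⟨facet_ne_top e b, fun y hy => eq_top_iff_side.2 fun c =>
    eq_empty_of_forall_notMem fun f hf => ?_⟩
  obtain ⟨rfl, rfl⟩ := mem_side_facet.1 (le_iff_side.1 hy.le c hf)
  exact hy.not_ge (le_facet.2 hf)

lemma isCoatom_iff {x : Cube n} : IsCoatom x ↔ ∃ e b, x = facet e b := by
  refine ⟨fun hx => ?_, by rintro ⟨e, b, rfl⟩; exact isCoatom_facet e b⟩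
  obtain ⟨e, he⟩ := support_nonempty hx.1
  obtain ⟨b, he⟩ := mem_support.1 he
  exact ⟨e, b, ((hx.le_iff.1 (le_facet.2 he)).resolve_left (facet_ne_top e b)).symm⟩

lemma corank_eq_one_iff {x : Cube n} : corank x = 1 ↔ ∃ e b, x = facet e b := by
  refine ⟨fun h => ?_, ?_⟩
  · rcases Nat.add_eq_one_iff.1 ((card_support x).symm.trans h) with ⟨hp, hn⟩ | ⟨hp, hn⟩
    · obtain ⟨e, he⟩ := card_eq_one.1 hn
      exact ⟨e, false, Cube.ext (by simpa [facet] using hp) (by simp [facet, he])⟩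
    · obtain ⟨e, he⟩ := card_eq_one.1 hp
      exact ⟨e, true, Cube.ext (by simp [facet, he]) (by simpa [facet] using hn)⟩
  · rintro ⟨e, b, rfl⟩
    cases b <;> simp [corank, facet]

lemma coatomsAbove_eq_image (a : Cube n) :
    coatomsAbove a = (fun p : Fin n × Bool => facet p.1 p.2) '' {p | p.1 ∈ a.side p.2} := by
  ext c
  simp only [coatomsAbove, corank_eq_one_iff, Set.mem_ofPred_eq, Set.mem_image, Prod.exists]
  constructor
  · rintro ⟨⟨e, b, rfl⟩, h⟩
    exact ⟨e, b, le_facet.1 h, rfl⟩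
  · rintro ⟨e, b, h, rfl⟩
    exact ⟨⟨e, b, rfl⟩, le_facet.2 h⟩

lemma ncard_coatomsAbove (a : Cube n) : (coatomsAbove a).ncard = #a.support := by
  have hsides :
      {p : Fin n × Bool | p.1 ∈ a.side p.2} = ↑(a.pos ×ˢ {true} ∪ a.neg ×ˢ {false}) := by
    ext ⟨e, b⟩
    cases b <;> simp
  rw [coatomsAbove_eq_image, Set.ncard_image_of_injective _
    fun p q h => Prod.ext_iff.2 (facet_injective h), hsides, Set.ncard_coe_finset,
    card_union_of_disjoint (disjoint_product.2 (Or.inr (by simp))), card_product, card_product,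
    card_support]
  simp

section SignedPermutation

variable (σ : Equiv.Perm (Fin n)) (ε : Fin n → Bool)

/-- The signed permutation `(σ, ε)` flips coordinate `e` when `ε e`, then moves it to `σ e`. -/
def act (x : Cube n) : Cube n where
  pos := {f | σ.symm f ∈ x.side (!ε (σ.symm f))}
  neg := {f | σ.symm f ∈ x.side (ε (σ.symm f))}
  disj := disjoint_filter.2 fun f _ h₁ h₂ =>
    disjoint_left.1 (x.disjoint_side_not _) h₁ (by rwa [Bool.not_not])

variable {σ ε}

@[simp] lemma mem_act_side {x : Cube n} {e : Fin n} {b : Bool} :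
    σ e ∈ (act σ ε x).side b ↔ e ∈ x.side (b ^^ ε e) := by
  cases b <;> simp [act]

lemma act_le_act_iff {x y : Cube n} : act σ ε x ≤ act σ ε y ↔ x ≤ y := by
  simp only [le_iff_side, subset_iff]
  refine ⟨fun h b e he => ?_, fun h b f hf => ?_⟩
  · simpa using @h (b ^^ ε e) (σ e) (by simpa using he)
  · obtain ⟨e, rfl⟩ := σ.surjective f
    exact mem_act_side.2 (h _ (mem_act_side.1 hf))

variable (σ ε)

noncomputable def actIso : Cube n ≃o Cube n where
  toEquiv := Equiv.ofBijective (act σ ε) <| Finite.injective_iff_bijective.1 fun _ _ h =>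
    le_antisymm (act_le_act_iff.1 h.le) (act_le_act_iff.1 h.ge)
  map_rel_iff' := act_le_act_iff

@[simp] lemma actIso_apply (x : Cube n) : actIso σ ε x = act σ ε x := rfl

lemma act_facet (e : Fin n) (b : Bool) : act σ ε (facet e b) = facet (σ e) (b ^^ ε e) := by
  refine ext_side fun c => Finset.ext fun f => ?_
  obtain ⟨f, rfl⟩ := σ.surjective f
  simp only [mem_act_side, mem_side_facet, σ.injective.eq_iff]
  constructor <;> rintro ⟨rfl, rfl⟩ <;> simp

lemma isAut_actIso : IsAut (actIso σ ε) := by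
  intro x y _
  refine ext_side fun b => Finset.ext fun f => ?_
  obtain ⟨e, rfl⟩ := σ.surjective f
  simp

lemma actIso_injective : Function.Injective fun p : Equiv.Perm (Fin n) × (Fin n → Bool) =>
    actIso p.1 p.2 := by
  rintro ⟨σ, ε⟩ ⟨σ', ε'⟩ h
  have key e := facet_injective <| by
    simpa [act_facet] using DFunLike.congr_fun h (facet e false)
  exact Prod.ext (Equiv.ext fun e => (key e).1) (funext fun e => (key e).2)

end SignedPermutation

lemma IsAut.map_anti {φ : Cube n ≃o Cube n} (hφ : IsAut φ) (x : Cube n) :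
    φ (anti x) = anti (φ x) := by
  simpa [delta_top] using hφ ⊤ x le_top

lemma orderIso_ext_of_facet {φ ψ : Cube n ≃o Cube n}
    (h : ∀ e b, φ (facet e b) = ψ (facet e b)) : φ = ψ := by
  refine DFunLike.ext _ _ fun x => ext_side fun b => Finset.ext fun e => ?_
  obtain ⟨f, c, hfc⟩ := isCoatom_iff.1 ((φ.symm.isCoatom_iff _).2 (isCoatom_facet e b))
  have hφ : φ (facet f c) = facet e b := by rw [← hfc, φ.apply_symm_apply]
  rw [← le_facet, ← le_facet, ← hφ, φ.le_iff_le, h, ψ.le_iff_le]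

lemma IsAut.exists_actIso_eq {φ : Cube n ≃o Cube n} (hφ : IsAut φ) :
    ∃ σ ε, actIso σ ε = φ := by
  choose τ ε hτε using fun e =>
    isCoatom_iff.1 ((φ.isCoatom_iff (facet e false)).2 (isCoatom_facet e false))
  have hφ_facet e b : φ (facet e b) = facet (τ e) (b ^^ ε e) := by
    cases b
    · simpa using hτε e
    · simpa [hτε] using hφ.map_anti (facet e false)
  have hτ : Function.Injective τ := fun e e' h => by
    have : φ (facet e false) = φ (facet e' (ε e ^^ ε e')) := by simp [hφ_facet, h]
    exact (facet_injective (φ.injective this)).1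
  refine ⟨Equiv.ofBijective τ (Finite.injective_iff_bijective.1 hτ), ε,
    orderIso_ext_of_facet fun e b => ?_⟩
  simp [act_facet, hφ_facet]

section Subalgebra

variable {A : Set (Cube n)}

lemma IsMRSub.anti_mem (hA : IsMRSub A) {x : Cube n} (hx : x ∈ A) : anti x ∈ A :=
  delta_top x ▸ hA.2.2.1 ⊤ hA.1 x hx le_top

lemma IsMRSub.anti_mem_coAt (hA : IsMRSub A) {a : Cube n} (ha : a ∈ coAt A) :
    anti a ∈ coAt A := by
  obtain ⟨haA, hat, hmax⟩ := ha
  refine ⟨hA.anti_mem haA, anti_eq_top_iff.not.2 hat, fun b hb hbt hab => ?_⟩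
  have := hmax (anti b) (hA.anti_mem hb) (anti_eq_top_iff.not.2 hbt)
    (le_iff_side.2 fun c => by simpa using le_iff_side.1 hab !c)
  rw [← this, anti_anti]

lemma IsMRSub.eq_of_mem_side (hA : IsMRSub A) {a a' : Cube n} (ha : a ∈ coAt A)
    (ha' : a' ∈ coAt A) {e : Fin n} {b : Bool} (he : e ∈ a.side b) (he' : e ∈ a'.side b) :
    a = a' := by
  have hsup : a ⊔ a' ≠ ⊤ := ne_top_of_mem_side (e := e) (b := b) (by simp [he, he'])
  have hmem := hA.2.1 a ha.1 a' ha'.1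
  exact (ha.2.2 _ hmem hsup le_sup_left).symm.trans (ha'.2.2 _ hmem hsup le_sup_right)

lemma exists_mem_coAt_le {x : Cube n} (hx : x ∈ A) (hxt : x ≠ ⊤) :
    ∃ a ∈ coAt A, x ≤ a := by
  obtain ⟨a, hxa, ⟨haA, hat⟩, hmax⟩ :=
    Finite.exists_le_maximal (p := fun y => y ∈ A ∧ y ≠ ⊤) ⟨hx, hxt⟩
  exact ⟨a, ⟨haA, hat, fun b hb hbt hab => le_antisymm (hmax ⟨hb, hbt⟩ hab) hab⟩, hxa⟩

lemma IsMRSub.exists_mem_coAt_mem_side (hA : IsMRSub A) {x : Cube n} (hx : x ∈ A) {e : Fin n}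
    {b : Bool} (he : e ∈ x.side b) : ∃ a ∈ coAt A, x ≤ a ∧ e ∈ a.side b := by
  induction x using WellFoundedGT.induction with
  | _ x ih =>
    obtain ⟨a, ha, hxa⟩ := exists_mem_coAt_le hx (ne_top_of_mem_side he)
    by_cases hea : e ∈ a.side b
    · exact ⟨a, ha, hxa, hea⟩
    set v := x ⊔ anti (delta a x)
    have hv c : v.side c = x.side c \ a.side c := by
      ext f
      have hdisj : f ∈ x.side c → f ∉ a.side !c := fun hf hf' =>
        disjoint_left.1 (x.disjoint_side_not c) hf (le_iff_side.1 hxa _ hf')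
      simp only [v, side_sup, side_anti, side_delta, Bool.not_not, mem_inter, mem_union, mem_sdiff]
      tauto
    have hxv : x < v := by
      refine lt_of_le_of_ne le_sup_left fun hxv => ha.2.1 (eq_top_iff_side.2 fun c => ?_)
      refine eq_empty_of_forall_notMem fun f hf => ?_
      have hfx : f ∈ v.side c := hxv ▸ le_iff_side.1 hxa c hf
      exact (mem_sdiff.1 (hv c ▸ hfx)).2 hf
    have hvA : v ∈ A := hA.2.1 _ hx _ (hA.anti_mem (hA.2.2.1 _ ha.1 _ hx hxa))
    obtain ⟨a', ha', hva', hea'⟩ := ih v hxv hvA (by rw [hv]; exact mem_sdiff.2 ⟨he, hea⟩)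
    exact ⟨a', ha', hxv.le.trans hva', hea'⟩

lemma IsMRSub.isGLB_coAt (hA : IsMRSub A) {x : Cube n} (hx : x ∈ A) :
    IsGLB {a | a ∈ coAt A ∧ x ≤ a} x :=
  ⟨fun _ ha => ha.2, fun y hy => le_iff_side.2 fun b e he => by
    obtain ⟨a, ha, hxa, hea⟩ := hA.exists_mem_coAt_mem_side hx he
    exact le_iff_side.1 (hy ⟨ha, hxa⟩) b hea⟩

lemma IsMRSub.map_eq_self (hA : IsMRSub A) {φ : Cube n ≃o Cube n}
    (hφ : ∀ a ∈ coAt A, φ a = a) {x : Cube n} (hx : x ∈ A) : φ x = x := by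
  have himage : φ '' {a | a ∈ coAt A ∧ x ≤ a} = {a | a ∈ coAt A ∧ x ≤ a} :=
    Set.EqOn.image_eq_self fun a ha => hφ a ha.1
  have hglb := (φ.isGLB_image' (s := {a | a ∈ coAt A ∧ x ≤ a})).2 (hA.isGLB_coAt hx)
  exact (himage ▸ hglb).unique (hA.isGLB_coAt hx)

lemma IsMRSub.freezing_eq_image (hA : IsMRSub A) :
    {φ | φ ∈ AutSet n ∧ ∀ x ∈ A, φ x = x} =
      (fun p : Equiv.Perm (Fin n) × (Fin n → Bool) => actIso p.1 p.2) ''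
        {p | ∀ a ∈ coAt A, act p.1 p.2 a = a} := by
  ext φ
  constructor
  · rintro ⟨hφ, hfix⟩
    obtain ⟨σ, ε, rfl⟩ := IsAut.exists_actIso_eq hφ
    exact ⟨(σ, ε), fun a ha => hfix a ha.1, rfl⟩
  · rintro ⟨⟨σ, ε⟩, hfix, rfl⟩
    exact ⟨isAut_actIso σ ε, fun x hx => hA.map_eq_self (φ := actIso σ ε) hfix hx⟩

def coAtSide (A : Set (Cube n)) (e : Fin n) (b : Bool) : Set (Cube n) :=
  {a | a ∈ coAt A ∧ e ∈ a.side b}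

lemma setOf_act_eq_self_eq_signedStabilizer :
    {p : Equiv.Perm (Fin n) × (Fin n → Bool) | ∀ a ∈ coAt A, act p.1 p.2 a = a} =
      signedStabilizer (coAtSide A) := by
  ext ⟨σ, ε⟩
  simp only [Set.mem_ofPred_eq, signedStabilizer, coAtSide, Set.ext_iff]
  constructor
  · intro h e b a
    exact and_congr_right fun ha => by rw [← mem_act_side, h a ha]
  · intro h a ha
    refine ext_side fun b => Finset.ext fun f => ?_
    obtain ⟨e, rfl⟩ := σ.surjective f
    simpa [ha] using (h e b a).symm

lemma IsMRSub.coAtSide_eq_singleton (hA : IsMRSub A) {a : Cube n} (ha : a ∈ coAt A) {e : Fin n}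
    {b : Bool} (he : e ∈ a.side b) : coAtSide A e b = {a} :=
  Set.eq_singleton_iff_unique_mem.2
    ⟨⟨ha, he⟩, fun _ ha' => (hA.eq_of_mem_side ha ha'.1 he ha'.2).symm⟩

lemma coAtSide_true_eq_false_iff {e : Fin n} :
    coAtSide A e true = coAtSide A e false ↔ ∀ a ∈ coAt A, e ∉ a.support := by
  refine ⟨fun h a ha he => ?_, fun h => ?_⟩
  · obtain ⟨b, hb⟩ := mem_support.1 he
    have hb' : a ∈ coAtSide A e (!b) := by
      cases b
      · rw [Bool.not_false, h]; exact ⟨ha, hb⟩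
      · rw [Bool.not_true, ← h]; exact ⟨ha, hb⟩
    exact disjoint_left.1 (a.disjoint_side_not b) hb hb'.2
  · ext a
    exact iff_of_false (fun h' => h a h'.1 (mem_support.2 ⟨_, h'.2⟩))
      (fun h' => h a h'.1 (mem_support.2 ⟨_, h'.2⟩))

lemma coAtSide_eq_empty {e : Fin n} (he : ∀ a ∈ coAt A, e ∉ a.support) (b : Bool) :
    coAtSide A e b = ∅ :=
  Set.eq_empty_of_forall_notMem fun a ha => he a ha.1 (mem_support.2 ⟨b, ha.2⟩)

lemma unorderedPair_coAtSide_eq_empty_iff {e : Fin n} :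
    unorderedPair (coAtSide A e) = s(∅, ∅) ↔ coAtSide A e true = coAtSide A e false := by
  refine ⟨fun h => ?_, fun h => ?_⟩
  · rcases Sym2.eq_iff.1 h with ⟨h₁, h₂⟩ | ⟨h₁, h₂⟩ <;> rw [h₁, h₂]
  · simp [unorderedPair, coAtSide_eq_empty (coAtSide_true_eq_false_iff.1 h)]

def coAtPair (a : Cube n) : Sym2 (Set (Cube n)) := s({a}, {anti a})

lemma coAtPair_eq_iff {a a' : Cube n} : coAtPair a' = coAtPair a ↔ a' = a ∨ a' = anti a := by
  simp only [coAtPair, Sym2.eq_iff, Set.singleton_eq_singleton_iff]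
  exact or_congr ⟨And.left, fun h => ⟨h, h ▸ rfl⟩⟩
    ⟨And.left, fun h => ⟨h, h ▸ anti_anti a⟩⟩

lemma IsMRSub.unorderedPair_coAtSide (hA : IsMRSub A) {a : Cube n} (ha : a ∈ coAt A)
    {e : Fin n} (he : e ∈ a.support) : unorderedPair (coAtSide A e) = coAtPair a := by
  obtain ⟨b, hb⟩ := mem_support.1 he
  have h₁ := hA.coAtSide_eq_singleton ha hb
  have h₂ := hA.coAtSide_eq_singleton (hA.anti_mem_coAt ha) (b := !b) (by simpa using hb)
  cases b
  · rw [Bool.not_false] at h₂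
    rw [unorderedPair, coAtPair, h₁, h₂, Sym2.eq_swap]
  · rw [Bool.not_true] at h₂
    rw [unorderedPair, coAtPair, h₁, h₂]

lemma IsMRSub.unorderedPair_coAtSide_eq_iff (hA : IsMRSub A) {a : Cube n} (ha : a ∈ coAt A)
    {e : Fin n} : unorderedPair (coAtSide A e) = coAtPair a ↔ e ∈ a.support := by
  refine ⟨fun h => ?_, hA.unorderedPair_coAtSide ha⟩
  have hmem : {a} ∈ unorderedPair (coAtSide A e) := h ▸ Sym2.mem_mk_left _ _
  obtain ⟨b, hb⟩ : ∃ b, {a} = coAtSide A e b := by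
    simpa [unorderedPair, Sym2.mem_iff, or_comm] using hmem
  exact mem_support.2 ⟨b, (hb ▸ Set.mem_singleton a : a ∈ coAtSide A e b).2⟩

open scoped Nat

noncomputable def coAtFinset (A : Set (Cube n)) : Finset (Cube n) :=
  (Set.toFinite (coAt A)).toFinset

@[simp] lemma mem_coAtFinset {a : Cube n} : a ∈ coAtFinset A ↔ a ∈ coAt A :=
  Set.Finite.mem_toFinset _

section TypeCount

variable {t : ℕ → ℕ}

lemma card_filter_card_support_eq (ht : ∀ i, 2 * t i = (typeSet A i).ncard) (i : ℕ) :
    #{a ∈ coAtFinset A | #a.support = i} = 2 * t i := by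
  rw [ht, typeSet, ← Set.ncard_coe_finset]
  congr 1
  ext a
  simp [ncard_coatomsAbove]

lemma card_support_mem_Icc {a : Cube n} (ha : a ∈ coAtFinset A) : #a.support ∈ Icc 1 n :=
  mem_Icc.2 ⟨card_pos.2 (support_nonempty (mem_coAtFinset.1 ha).2.1),
    (card_le_univ _).trans_eq (Fintype.card_fin n)⟩

lemma sum_card_support (ht : ∀ i, 2 * t i = (typeSet A i).ncard) :
    ∑ a ∈ coAtFinset A, #a.support = 2 * ∑ i ∈ Icc 1 n, i * t i := by
  rw [← sum_fiberwise_of_maps_to' (fun _ => card_support_mem_Icc) fun i => i, mul_sum]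
  refine sum_congr rfl fun i _ => ?_
  rw [sum_const, smul_eq_mul, card_filter_card_support_eq ht]
  ring

lemma prod_factorial_card_support (ht : ∀ i, 2 * t i = (typeSet A i).ncard) :
    ∏ a ∈ coAtFinset A, (#a.support)! = (∏ i ∈ Icc 1 n, i ! ^ t i) ^ 2 := by
  rw [← prod_fiberwise_of_maps_to' (fun _ => card_support_mem_Icc) Nat.factorial, ← prod_pow]
  refine prod_congr rfl fun i _ => ?_
  rw [prod_const, card_filter_card_support_eq ht, ← pow_mul, mul_comm]

end TypeCount

section Fibers

variable [DecidableEq (Set (Cube n))]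

lemma IsMRSub.unorderedPair_coAtSide_mem (hA : IsMRSub A) (e : Fin n) :
    unorderedPair (coAtSide A e) ∈ insert s(∅, ∅) ((coAtFinset A).image coAtPair) := by
  by_cases he : ∃ a ∈ coAt A, e ∈ a.support
  · obtain ⟨a, ha, hea⟩ := he
    rw [hA.unorderedPair_coAtSide ha hea]
    exact mem_insert_of_mem (mem_image_of_mem _ (mem_coAtFinset.2 ha))
  · push Not at he
    simp [unorderedPair, coAtSide_eq_empty he]

lemma empty_pair_notMem_image_coAtPair : s(∅, ∅) ∉ (coAtFinset A).image coAtPair := by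
  simp [coAtPair]

lemma IsMRSub.card_eq_add_sum (hA : IsMRSub A) :
    n = #{e | coAtSide A e true = coAtSide A e false} +
      ∑ p ∈ (coAtFinset A).image coAtPair, #{e | unorderedPair (coAtSide A e) = p} := by
  have := card_eq_sum_card_fiberwise (s := univ) fun e _ => hA.unorderedPair_coAtSide_mem e
  rwa [card_univ, Fintype.card_fin, sum_insert empty_pair_notMem_image_coAtPair,
    filter_congr fun e _ => unorderedPair_coAtSide_eq_empty_iff] at this

lemma IsMRSub.prod_image_eq (hA : IsMRSub A) :
    ∏ p ∈ univ.image (unorderedPair ∘ coAtSide A),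
        (#{e | unorderedPair (coAtSide A e) = p})! =
      (#{e | coAtSide A e true = coAtSide A e false})! *
        ∏ p ∈ (coAtFinset A).image coAtPair, (#{e | unorderedPair (coAtSide A e) = p})! := by
  have hsub : univ.image (unorderedPair ∘ coAtSide A) ⊆
      insert s(∅, ∅) ((coAtFinset A).image coAtPair) :=
    image_subset_iff.2 fun e _ => hA.unorderedPair_coAtSide_mem e
  rw [prod_subset hsub, prod_insert empty_pair_notMem_image_coAtPair]
  · rw [filter_congr fun e _ => unorderedPair_coAtSide_eq_empty_iff]
  · intro p _ hp
    rw [card_eq_zero.2 (filter_eq_empty_iff.2 fun e _ (he : unorderedPair _ = p) =>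
      hp (he ▸ mem_image_of_mem _ (mem_univ e))), Nat.factorial_zero]

lemma IsMRSub.card_filter_coAtPair (hA : IsMRSub A) {p : Sym2 (Set (Cube n))}
    (hp : p ∈ (coAtFinset A).image coAtPair) : #{a ∈ coAtFinset A | coAtPair a = p} = 2 := by
  classical
  obtain ⟨a, ha, rfl⟩ := mem_image.1 hp
  rw [mem_coAtFinset] at ha
  have hfiber : {a' ∈ coAtFinset A | coAtPair a' = coAtPair a} = {a, anti a} := by
    ext a'
    simp only [mem_filter, mem_coAtFinset, coAtPair_eq_iff, mem_insert, mem_singleton]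
    refine ⟨And.right, ?_⟩
    rintro (rfl | rfl)
    exacts [⟨ha, Or.inl rfl⟩, ⟨hA.anti_mem_coAt ha, Or.inr rfl⟩]
  rw [hfiber, card_pair (anti_ne_self ha.2.1).symm]

lemma IsMRSub.card_filter_unorderedPair_eq_coAtPair (hA : IsMRSub A) {a : Cube n}
    (ha : a ∈ coAtFinset A) : #{e | unorderedPair (coAtSide A e) = coAtPair a} = #a.support := by
  simp [hA.unorderedPair_coAtSide_eq_iff (mem_coAtFinset.1 ha)]

lemma IsMRSub.two_mul_sum_card_fiber (hA : IsMRSub A) :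
    2 * ∑ p ∈ (coAtFinset A).image coAtPair, #{e | unorderedPair (coAtSide A e) = p} =
      ∑ a ∈ coAtFinset A, #a.support := by
  rw [← smul_eq_mul, ← sum_comp_eq_nsmul_of_card_fiber fun _ => hA.card_filter_coAtPair]
  exact sum_congr rfl fun a ha => hA.card_filter_unorderedPair_eq_coAtPair ha

lemma IsMRSub.sq_prod_factorial_card_fiber (hA : IsMRSub A) :
    (∏ p ∈ (coAtFinset A).image coAtPair, (#{e | unorderedPair (coAtSide A e) = p})!) ^ 2 =
      ∏ a ∈ coAtFinset A, (#a.support)! := by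
  rw [← prod_comp_eq_pow_of_card_fiber fun _ => hA.card_filter_coAtPair]
  exact prod_congr rfl fun a ha => by rw [hA.card_filter_unorderedPair_eq_coAtPair ha]

end Fibers

theorem IsMRSub.ncard_signedStabilizer_coAtSide (hA : IsMRSub A) {t : ℕ → ℕ}
    (ht : ∀ i, 2 * t i = (typeSet A i).ncard) {r : ℕ} (hr : r = ∑ i ∈ Icc 1 n, i * t i) :
    (signedStabilizer (coAtSide A)).ncard =
      2 ^ (n - r) * (n - r)! * ∏ i ∈ Icc 1 n, i ! ^ t i := by
  classical
  have hn := hA.card_eq_add_sum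
  have hsum := hA.two_mul_sum_card_fiber
  rw [sum_card_support ht, ← hr] at hsum
  have hprod : ∏ p ∈ (coAtFinset A).image coAtPair, (#{e | unorderedPair (coAtSide A e) = p})! =
      ∏ i ∈ Icc 1 n, i ! ^ t i :=
    Nat.pow_left_injective two_ne_zero <|
      hA.sq_prod_factorial_card_fiber.trans (prod_factorial_card_support ht)
  rw [ncard_signedStabilizer, hA.prod_image_eq, hprod,
    show #{e | coAtSide A e true = coAtSide A e false} = n - r by omega]
  ring

end Subalgebra

end Cube

theorem freeze_card_general (n : ℕ) (A : Set (Cube n)) (hA : Cube.IsMRSub A)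
    (t : ℕ → ℕ) (ht : ∀ i, 2 * t i = (Cube.typeSet A i).ncard)
    (r : ℕ) (hr : r = ∑ i ∈ Finset.Icc 1 n, i * t i) :
    ({φ | φ ∈ Cube.AutSet n ∧ ∀ x ∈ A, φ x = x} : Set (Cube n ≃o Cube n)).ncard =
      2 ^ (n - r) * Nat.factorial (n - r) *
        ∏ i ∈ Finset.Icc 1 n, Nat.factorial i ^ t i := by
  rw [hA.freezing_eq_image, Set.ncard_image_of_injective _ Cube.actIso_injective,
    Cube.setOf_act_eq_self_eq_signedStabilizer, hA.ncard_signedStabilizer_coAtSide ht hr]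

/-- The freezing subgroup of an MR-subalgebra `A` of `𝓛ₙ` has cardinality
`2^{n-r} (n-r)! ∏ᵢ (i!)^{tᵢ}`. -/
theorem freeze_card (n : ℕ) (hn : 1 ≤ n) (A : Set (Cube n)) (hA : Cube.IsMRSub A)
    (t : ℕ → ℕ) (ht : ∀ i, 2 * t i = (Cube.typeSet A i).ncard)
    (r : ℕ) (hr : r = ∑ i ∈ Finset.Icc 1 n, i * t i) :
    ({φ | φ ∈ Cube.AutSet n ∧ ∀ x ∈ A, φ x = x} : Set (Cube n ≃o Cube n)).ncard =
      2 ^ (n - r) * Nat.factorial (n - r) *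
        ∏ i ∈ Finset.Icc 1 n, Nat.factorial i ^ t i :=
  freeze_card_general n A hA t ht r hr
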